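/- Let n ≥ 2 and Λ_{j,k} = (cot(π(j-k+1/2)/n) - cot(π(j-k-1/2)/n))/n. Then Λ, viewed as a real symmetric matrix, is positive semidefinite, and its kernel is exactly the span of the all-ones vector. -/

import Mathlib

open Complex Finset

noncomputable def ww (n : ℕ) (a : ℤ) : ℂ := Complex.exp (Real.pi * a * Complex.I / n)

lemma sin_ne (n : ℕ) (hn : 0 < n) {a : ℤ} (ha : Odd a) :
    Real.sin (Real.pi * a / (2 * n)) ≠ 0 := by
  intro h
  rw [Real.sin_eq_zero_iff] at h
  obtain ⟨k, hk⟩ := h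
  have hn' : (n : ℝ) ≠ 0 := Nat.cast_ne_zero.mpr hn.ne'
  have h2 : ((k * (2 * n) : ℤ) : ℝ) = (a : ℝ) := by
    push_cast
    field_simp at hk
    nlinarith [Real.pi_pos, hk]
  have h3 : k * (2 * n) = a := by exact_mod_cast h2
  have he : Even a := ⟨k * n, by linarith⟩
  exact (Int.not_odd_iff_even.mpr he) ha

lemma ww_sub_one (n : ℕ) (hn : 0 < n) (a : ℤ) :
    ww n a - 1 = Complex.exp (Real.pi * a * Complex.I / (2 * n)) *
      (2 * Complex.I * Real.sin (Real.pi * a / (2 * n))) := by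
  have hn' : (n : ℝ) ≠ 0 := Nat.cast_ne_zero.mpr hn.ne'
  set c : ℝ := Real.pi * a / (2 * n) with hc
  have h1 : (Real.pi * (a : ℂ) * Complex.I / n) = 2 * (c : ℂ) * Complex.I := by
    rw [hc]; push_cast; field_simp
  have h1' : (Real.pi * (a : ℂ) * Complex.I / (2 * n)) = (c : ℂ) * Complex.I := by
    rw [hc]; push_cast; field_simp
  have h2 : Complex.exp (2 * (c:ℂ) * Complex.I)
      = Complex.exp ((c:ℂ) * Complex.I) * Complex.exp ((c:ℂ) * Complex.I) := by
    rw [← Complex.exp_add]; ring_nf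
  have h3 : Complex.exp ((c:ℂ) * Complex.I) * Complex.exp (-(c:ℂ) * Complex.I) = 1 := by
    rw [← Complex.exp_add]; ring_nf; exact Complex.exp_zero
  rw [ww, h1, h1', h2, Complex.ofReal_sin, Complex.sin]
  linear_combination (Complex.exp ((c:ℂ) * Complex.I) ^ 2
    - Complex.exp ((c:ℂ) * Complex.I) * Complex.exp (-(c:ℂ) * Complex.I)) * Complex.I_sq + h3

lemma ww_add_one (n : ℕ) (hn : 0 < n) (a : ℤ) :
    ww n a + 1 = Complex.exp (Real.pi * a * Complex.I / (2 * n)) *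
      (2 * Real.cos (Real.pi * a / (2 * n))) := by
  have hn' : (n : ℝ) ≠ 0 := Nat.cast_ne_zero.mpr hn.ne'
  set c : ℝ := Real.pi * a / (2 * n) with hc
  have h1 : (Real.pi * (a : ℂ) * Complex.I / n) = 2 * (c : ℂ) * Complex.I := by
    rw [hc]; push_cast; field_simp
  have h1' : (Real.pi * (a : ℂ) * Complex.I / (2 * n)) = (c : ℂ) * Complex.I := by
    rw [hc]; push_cast; field_simp
  have h2 : Complex.exp (2 * (c:ℂ) * Complex.I)
      = Complex.exp ((c:ℂ) * Complex.I) * Complex.exp ((c:ℂ) * Complex.I) := by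
    rw [← Complex.exp_add]; ring_nf
  have h3 : Complex.exp ((c:ℂ) * Complex.I) * Complex.exp (-(c:ℂ) * Complex.I) = 1 := by
    rw [← Complex.exp_add]; ring_nf; exact Complex.exp_zero
  rw [ww, h1, h1', h2, Complex.ofReal_cos, Complex.cos]
  linear_combination -h3

lemma ww_sub_one_ne (n : ℕ) (hn : 0 < n) {a : ℤ} (ha : Odd a) : ww n a - 1 ≠ 0 := by
  rw [ww_sub_one n hn a]
  have hs := sin_ne n hn ha
  apply mul_ne_zero (Complex.exp_ne_zero _)
  apply mul_ne_zero (mul_ne_zero two_ne_zero Complex.I_ne_zero)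
  exact Complex.ofReal_ne_zero.mpr hs

lemma cot_eq (n : ℕ) (hn : 0 < n) {a : ℤ} (ha : Odd a) :
    (Real.cot (Real.pi * a / (2 * n)) : ℂ)
      = Complex.I * (ww n a + 1) / (ww n a - 1) := by
  have hs := sin_ne n hn ha
  rw [Real.cot_eq_cos_div_sin, ww_add_one n hn a, ww_sub_one n hn a]
  have hE := Complex.exp_ne_zero (Real.pi * (a:ℂ) * Complex.I / (2 * n))
  have hs' : (Real.sin (Real.pi * a / (2 * n)) : ℂ) ≠ 0 := by
    exact_mod_cast Complex.ofReal_ne_zero.mpr hs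
  push_cast
  have hs2 : Complex.sin ((Real.pi:ℂ) * a / (2 * n)) ≠ 0 := by
    rw [show ((Real.pi:ℂ) * a / (2 * n)) = ((Real.pi * a / (2 * n) : ℝ) : ℂ) by push_cast; ring,
      ← Complex.ofReal_sin]
    exact hs'
  field_simp [hE, hs2]

lemma ww_pow (n : ℕ) (hn : 0 < n) {a : ℤ} (ha : Odd a) : ww n a ^ n = -1 := by
  have hn' : (n : ℂ) ≠ 0 := Nat.cast_ne_zero.mpr hn.ne'
  rw [ww, ← Complex.exp_nat_mul]
  obtain ⟨b, hb⟩ := ha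
  have : (n : ℂ) * (Real.pi * a * Complex.I / n) = b * (2 * Real.pi * Complex.I) + Real.pi * Complex.I := by
    field_simp
    rw [hb]; push_cast; ring
  rw [this, Complex.exp_add, Complex.exp_int_mul_two_pi_mul_I, Complex.exp_pi_mul_I, one_mul]

lemma geom (n : ℕ) (hn : 0 < n) {a : ℤ} (ha : Odd a) :
    ∑ m ∈ Finset.range n, ww n a ^ m = -2 / (ww n a - 1) := by
  rw [geom_sum_eq (fun h => ww_sub_one_ne n hn ha (by rw [h]; ring)) n, ww_pow n hn ha]
  norm_num

lemma expsum (n : ℕ) (hn : 0 < n) (a : ℤ) (ha : ¬ (n:ℤ) ∣ a) :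
    ∑ m ∈ Finset.range n, Complex.exp (2 * Real.pi * a * Complex.I / n) ^ m = 0 := by
  have hn' : (n : ℂ) ≠ 0 := Nat.cast_ne_zero.mpr hn.ne'
  have h1 : Complex.exp (2 * Real.pi * a * Complex.I / n) ≠ 1 := by
    intro h1'
    rw [Complex.exp_eq_one_iff] at h1'
    obtain ⟨k, hk⟩ := h1'
    apply ha ⟨k, ?_⟩
    field_simp at hk
    have h2 : (2*(Real.pi:ℂ)*Complex.I) * a = (2*(Real.pi:ℂ)*Complex.I) * ((k:ℂ)*n) := by
      linear_combination (2*(Real.pi:ℂ)*Complex.I) * hk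
    have h3 : (a:ℂ) = (k:ℂ) * n := mul_left_cancel₀
      (mul_ne_zero (mul_ne_zero two_ne_zero (Complex.ofReal_ne_zero.mpr Real.pi_ne_zero))
        Complex.I_ne_zero) h2
    have h4 : a = k * n := by exact_mod_cast h3
    rw [h4]; ring
  rw [geom_sum_eq h1 n, ← Complex.exp_nat_mul]
  have : (n : ℂ) * (2 * Real.pi * a * Complex.I / n) = a * (2 * Real.pi * Complex.I) := by
    field_simp
  rw [this, Complex.exp_int_mul_two_pi_mul_I]
  simp

lemma key (n : ℕ) (hn : 0 < n) (d : ℤ) :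
    ((Real.cot (Real.pi * ((2*d+1 : ℤ) : ℝ) / (2*n)) - Real.cot (Real.pi * ((2*d-1 : ℤ) : ℝ) / (2*n)) : ℝ) : ℂ)
      = ∑ m ∈ Finset.range n, (2:ℂ) * (Real.sin (Real.pi * m / n) : ℂ)
          * Complex.exp (2 * Real.pi * d * m * Complex.I / n) := by
  have hn' : (n : ℂ) ≠ 0 := Nat.cast_ne_zero.mpr hn.ne'
  have ho1 : Odd (2*d+1) := ⟨d, by ring⟩
  have ho2 : Odd (2*d-1) := ⟨d-1, by ring⟩
  have hterm : ∀ m ∈ Finset.range n,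
      (2:ℂ) * (Real.sin (Real.pi * m / n) : ℂ) * Complex.exp (2 * Real.pi * d * m * Complex.I / n)
        = Complex.I * (ww n (2*d-1) ^ m - ww n (2*d+1) ^ m) := by
    intro m _
    rw [ww, ww, ← Complex.exp_nat_mul, ← Complex.exp_nat_mul, Complex.ofReal_sin, Complex.sin]
    have e1 : -(((Real.pi * m / n : ℝ)) : ℂ) * Complex.I + 2 * Real.pi * d * m * Complex.I / n
        = (m:ℂ) * (Real.pi * ((2*d-1 : ℤ):ℂ) * Complex.I / n) := by
      push_cast; field_simp; ring
    have e2 : (((Real.pi * m / n : ℝ)) : ℂ) * Complex.I + 2 * Real.pi * d * m * Complex.I / n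
        = (m:ℂ) * (Real.pi * ((2*d+1 : ℤ):ℂ) * Complex.I / n) := by
      push_cast; field_simp; ring
    rw [← e1, ← e2, Complex.exp_add, Complex.exp_add]
    ring
  rw [Finset.sum_congr rfl hterm, ← Finset.mul_sum, Finset.sum_sub_distrib,
    geom n hn ho2, geom n hn ho1, Complex.ofReal_sub, cot_eq n hn ho1, cot_eq n hn ho2]
  have h1 := ww_sub_one_ne n hn ho1
  have h2 := ww_sub_one_ne n hn ho2
  field_simp
  ring

lemma sum_form (n : ℕ) (hn : 2 ≤ n)
    (Λ : Matrix (Fin n) (Fin n) ℝ)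
    (hΛ : ∀ j k : Fin n, Λ j k =
      (Real.cot (Real.pi * ((j.1 + 1 : ℝ) - (k.1 + 1) + 1 / 2) / n)
        - Real.cot (Real.pi * ((j.1 + 1 : ℝ) - (k.1 + 1) - 1 / 2) / n)) / n)
    (v : Fin n → ℝ) (j : Fin n) :
    ((Λ.mulVec v j : ℝ) : ℂ) = (1/(n:ℂ)) * ∑ m ∈ Finset.range n,
      (2:ℂ) * (Real.sin (Real.pi * m / n) : ℂ) *
        (Complex.exp (2 * Real.pi * m * j.1 * Complex.I / n) *
          ∑ k : Fin n, (v k : ℂ) * Complex.exp (-(2 * Real.pi * m * k.1 * Complex.I) / n)) := by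
  have hn0 : 0 < n := by omega
  have hnR : (n : ℝ) ≠ 0 := Nat.cast_ne_zero.mpr hn0.ne'
  have hnC : (n : ℂ) ≠ 0 := Nat.cast_ne_zero.mpr hn0.ne'
  have entry : ∀ k : Fin n, (Λ j k : ℂ) = (1/(n:ℂ)) * ∑ m ∈ Finset.range n,
      (2:ℂ) * (Real.sin (Real.pi * m / n) : ℂ) *
        (Complex.exp (2 * Real.pi * m * j.1 * Complex.I / n) *
          Complex.exp (-(2 * Real.pi * m * k.1 * Complex.I) / n)) := by
    intro k
    set d : ℤ := (j.1 : ℤ) - (k.1 : ℤ) with hd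
    have a1 : Real.pi * ((j.1 + 1 : ℝ) - (k.1 + 1) + 1 / 2) / n
        = Real.pi * ((2*d+1 : ℤ) : ℝ) / (2*n) := by
      rw [hd]; push_cast
      rw [div_eq_div_iff hnR (by positivity : (2:ℝ) * n ≠ 0)]; ring
    have a2 : Real.pi * ((j.1 + 1 : ℝ) - (k.1 + 1) - 1 / 2) / n
        = Real.pi * ((2*d-1 : ℤ) : ℝ) / (2*n) := by
      rw [hd]; push_cast
      rw [div_eq_div_iff hnR (by positivity : (2:ℝ) * n ≠ 0)]; ring
    rw [hΛ j k, a1, a2]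
    have hk := key n hn0 d
    push_cast at hk ⊢
    rw [hk]
    rw [Finset.sum_div, Finset.mul_sum]
    refine Finset.sum_congr rfl fun m _ => ?_
    have e3 : 2 * Real.pi * (d:ℂ) * m * Complex.I / n
        = 2 * Real.pi * m * (j.1:ℂ) * Complex.I / n + -(2 * Real.pi * m * (k.1:ℂ) * Complex.I) / n := by
      rw [hd]; push_cast; field_simp; ring
    rw [e3, Complex.exp_add]
    ring
  have hmv : ((Λ.mulVec v j : ℝ) : ℂ) = ∑ k : Fin n, (Λ j k : ℂ) * (v k : ℂ) := by
    simp [Matrix.mulVec, dotProduct]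
  rw [hmv]
  calc ∑ k : Fin n, (Λ j k : ℂ) * (v k : ℂ)
      = ∑ k : Fin n, ((1/(n:ℂ)) * ∑ m ∈ Finset.range n,
          (2:ℂ) * (Real.sin (Real.pi * m / n) : ℂ) *
            (Complex.exp (2 * Real.pi * m * j.1 * Complex.I / n) *
              Complex.exp (-(2 * Real.pi * m * k.1 * Complex.I) / n))) * (v k : ℂ) := by
        exact Finset.sum_congr rfl fun k _ => by rw [entry k]
    _ = (1/(n:ℂ)) * ∑ m ∈ Finset.range n,
      (2:ℂ) * (Real.sin (Real.pi * m / n) : ℂ) *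
        (Complex.exp (2 * Real.pi * m * j.1 * Complex.I / n) *
          ∑ k : Fin n, (v k : ℂ) * Complex.exp (-(2 * Real.pi * m * k.1 * Complex.I) / n)) := by
        simp only [Finset.sum_mul, Finset.mul_sum]
        rw [Finset.sum_comm]
        exact Finset.sum_congr rfl fun m _ => Finset.sum_congr rfl fun k _ => by ring

lemma orth (n : ℕ) (hn : 0 < n) (j k : Fin n) :
    ∑ m ∈ Finset.range n, Complex.exp (2 * Real.pi * m * j.1 * Complex.I / n) *
        Complex.exp (-(2 * Real.pi * m * k.1 * Complex.I) / n)
      = if k = j then (n:ℂ) else 0 := by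
  have hnC : (n : ℂ) ≠ 0 := Nat.cast_ne_zero.mpr hn.ne'
  set a : ℤ := (j.1 : ℤ) - (k.1 : ℤ) with ha
  have hterm : ∀ m ∈ Finset.range n,
      Complex.exp (2 * Real.pi * m * j.1 * Complex.I / n) *
        Complex.exp (-(2 * Real.pi * m * k.1 * Complex.I) / n)
      = Complex.exp (2 * Real.pi * a * Complex.I / n) ^ m := by
    intro m _
    rw [← Complex.exp_nat_mul, ← Complex.exp_add]
    congr 1
    rw [ha]; push_cast; field_simp; ring
  rw [Finset.sum_congr rfl hterm]
  by_cases h : k = j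
  · simp only [h, if_pos]
    have : a = 0 := by rw [ha, h]; ring
    simp [this]
  · rw [if_neg h]
    apply expsum n hn a
    intro hdvd
    have h1 : a ≠ 0 := by
      rw [ha]
      intro hz
      exact h (Fin.ext (by omega))
    have h2 : a.natAbs < n := by
      have := j.2; have := k.2
      rw [ha]; omega
    have h3 : (n:ℤ) ∣ (a.natAbs : ℤ) := (Int.dvd_natAbs).mpr hdvd
    have h4 : n ∣ a.natAbs := Int.ofNat_dvd.mp h3
    have h5 : a.natAbs ≠ 0 := fun hz => h1 (Int.natAbs_eq_zero.mp hz)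
    exact absurd (Nat.le_of_dvd (Nat.pos_of_ne_zero h5) h4) (not_le.mpr h2)

lemma colsum (n : ℕ) (hn : 0 < n) (m : ℕ) (hm0 : m ≠ 0) (hm : m < n) :
    ∑ k : Fin n, Complex.exp (-(2 * Real.pi * m * k.1 * Complex.I) / n) = 0 := by
  have hterm : ∀ k : Fin n,
      Complex.exp (-(2 * Real.pi * m * k.1 * Complex.I) / n)
        = Complex.exp (2 * Real.pi * ((-(m:ℤ) : ℤ):ℂ) * Complex.I / n) ^ k.1 := by
    intro k
    rw [← Complex.exp_nat_mul]
    congr 1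
    push_cast; field_simp
  calc ∑ k : Fin n, Complex.exp (-(2 * Real.pi * m * k.1 * Complex.I) / n)
      = ∑ k ∈ Finset.range n, Complex.exp (2 * Real.pi * ((-(m:ℤ) : ℤ):ℂ) * Complex.I / n) ^ k := by
        rw [← Fin.sum_univ_eq_sum_range]
        exact Finset.sum_congr rfl fun k _ => hterm k
    _ = 0 := by
        apply expsum n hn
        rw [Int.dvd_neg, Int.natCast_dvd_natCast]
        intro hd
        exact absurd (Nat.le_of_dvd (Nat.pos_of_ne_zero hm0) hd) (not_le.mpr hm)

lemma conj_F (n : ℕ) (x : Fin n → ℝ) (m : ℕ) :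
    (starRingEnd ℂ) (∑ k : Fin n, (x k : ℂ) * Complex.exp (-(2 * Real.pi * m * k.1 * Complex.I) / n))
      = ∑ k : Fin n, (x k : ℂ) * Complex.exp (2 * Real.pi * m * k.1 * Complex.I / n) := by
  rw [map_sum]
  refine Finset.sum_congr rfl fun k _ => ?_
  rw [map_mul, Complex.conj_ofReal, ← Complex.exp_conj]
  congr 1
  simp only [map_div₀, map_neg, map_mul, Complex.conj_I, Complex.conj_ofReal, map_ofNat,
    Complex.conj_natCast]
  ring

lemma quad (n : ℕ) (hn : 2 ≤ n)
    (Λ : Matrix (Fin n) (Fin n) ℝ)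
    (hΛ : ∀ j k : Fin n, Λ j k =
      (Real.cot (Real.pi * ((j.1 + 1 : ℝ) - (k.1 + 1) + 1 / 2) / n)
        - Real.cot (Real.pi * ((j.1 + 1 : ℝ) - (k.1 + 1) - 1 / 2) / n)) / n)
    (x : Fin n → ℝ) :
    dotProduct x (Λ.mulVec x) = (1/(n:ℝ)) * ∑ m ∈ Finset.range n,
      2 * Real.sin (Real.pi * m / n) *
        Complex.normSq (∑ k : Fin n, (x k : ℂ) * Complex.exp (-(2 * Real.pi * m * k.1 * Complex.I) / n)) := by
  apply Complex.ofReal_injective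
  push_cast
  have hdot : ((dotProduct x (Λ.mulVec x) : ℝ) : ℂ)
      = ∑ j : Fin n, (x j : ℂ) * ((Λ.mulVec x j : ℝ) : ℂ) := by
    simp [dotProduct]
  rw [hdot]
  calc ∑ j : Fin n, (x j : ℂ) * ((Λ.mulVec x j : ℝ) : ℂ)
      = ∑ j : Fin n, (x j : ℂ) * ((1/(n:ℂ)) * ∑ m ∈ Finset.range n,
          (2:ℂ) * (Real.sin (Real.pi * m / n) : ℂ) *
            (Complex.exp (2 * Real.pi * m * j.1 * Complex.I / n) *
              ∑ k : Fin n, (x k : ℂ) * Complex.exp (-(2 * Real.pi * m * k.1 * Complex.I) / n))) :=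
        Finset.sum_congr rfl fun j _ => by rw [sum_form n hn Λ hΛ x j]
    _ = (1/(n:ℂ)) * ∑ m ∈ Finset.range n, (2:ℂ) * (Real.sin (Real.pi * m / n) : ℂ) *
          ((∑ j : Fin n, (x j : ℂ) * Complex.exp (2 * Real.pi * m * j.1 * Complex.I / n)) *
            ∑ k : Fin n, (x k : ℂ) * Complex.exp (-(2 * Real.pi * m * k.1 * Complex.I) / n)) := by
        simp only [Finset.mul_sum, Finset.sum_mul]
        rw [Finset.sum_comm]
        refine Finset.sum_congr rfl fun m _ => ?_
        conv_lhs => rw [Finset.sum_comm]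
        exact Finset.sum_congr rfl fun j _ => Finset.sum_congr rfl fun k _ => by ring
    _ = (1/(n:ℂ)) * ∑ m ∈ Finset.range n, (2:ℂ) * (Real.sin (Real.pi * m / n) : ℂ) *
          ((Complex.normSq (∑ k : Fin n, (x k : ℂ) * Complex.exp (-(2 * Real.pi * m * k.1 * Complex.I) / n)) : ℝ) : ℂ) := by
        refine congrArg _ (Finset.sum_congr rfl fun m _ => ?_)
        rw [← conj_F n x m, ← Complex.normSq_eq_conj_mul_self]
  push_cast
  ring

theorem stmt_16 (n : ℕ) (hn : 2 ≤ n)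
    (Λ : Matrix (Fin n) (Fin n) ℝ)
    (hΛ : ∀ j k : Fin n, Λ j k =
      (Real.cot (Real.pi * ((j.1 + 1 : ℝ) - (k.1 + 1) + 1 / 2) / n)
        - Real.cot (Real.pi * ((j.1 + 1 : ℝ) - (k.1 + 1) - 1 / 2) / n)) / n) :
    Λ.PosSemidef ∧ ∀ v : Fin n → ℝ, Λ.mulVec v = 0 ↔ ∃ c : ℝ, v = fun _ => c := by
  have hn0 : 0 < n := by omega
  have hnR : (n:ℝ) ≠ 0 := Nat.cast_ne_zero.mpr hn0.ne'
  have hsin : ∀ m ∈ Finset.range n, 0 ≤ Real.sin (Real.pi * m / n) := by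
    intro m hm
    rw [Finset.mem_range] at hm
    apply Real.sin_nonneg_of_nonneg_of_le_pi
    · positivity
    · rw [div_le_iff₀ (by positivity)]
      have : (m:ℝ) ≤ n := by exact_mod_cast hm.le
      nlinarith [Real.pi_pos]
  have herm : Λ.IsHermitian := by
    have cotneg : ∀ x : ℝ, Real.cot (-x) = -Real.cot x := fun x => by
      simp [Real.cot_eq_cos_div_sin, Real.cos_neg, Real.sin_neg, neg_div, div_neg]
    show Λ.conjTranspose = Λ
    ext i j
    rw [Matrix.conjTranspose_apply]
    show star (Λ j i) = Λ i j
    rw [star_trivial, hΛ j i, hΛ i j]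
    have e1 : Real.pi * ((j.1 + 1 : ℝ) - (i.1 + 1) + 1/2) / n
        = -(Real.pi * ((i.1 + 1 : ℝ) - (j.1 + 1) - 1/2) / n) := by ring
    have e2 : Real.pi * ((j.1 + 1 : ℝ) - (i.1 + 1) - 1/2) / n
        = -(Real.pi * ((i.1 + 1 : ℝ) - (j.1 + 1) + 1/2) / n) := by ring
    rw [e1, e2, cotneg, cotneg]; ring
  refine ⟨Matrix.posSemidef_iff_dotProduct_mulVec.mpr ⟨herm, ?_⟩, ?_⟩
  · intro x
    have hstar : star x = x := funext fun i => star_trivial _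
    have hq := quad n hn Λ hΛ x
    rw [hstar, hq]
    apply mul_nonneg (by positivity)
    apply Finset.sum_nonneg
    intro m hm
    exact mul_nonneg (mul_nonneg (by norm_num) (hsin m hm)) (Complex.normSq_nonneg _)
  · intro v
    constructor
    · intro hmul
      have hq := quad n hn Λ hΛ v
      rw [hmul, dotProduct_zero] at hq
      have hsum0 : ∑ m ∈ Finset.range n, 2 * Real.sin (Real.pi * m / n) *
          Complex.normSq (∑ k : Fin n, (v k : ℂ) * Complex.exp (-(2 * Real.pi * m * k.1 * Complex.I) / n)) = 0 :=
        (mul_eq_zero.mp hq.symm).resolve_left (by positivity)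
      have hterm0 := (Finset.sum_eq_zero_iff_of_nonneg (fun m hm =>
        mul_nonneg (mul_nonneg (by norm_num) (hsin m hm)) (Complex.normSq_nonneg _))).mp hsum0
      have hFzero : ∀ m, 0 < m → m < n →
          (∑ k : Fin n, (v k : ℂ) * Complex.exp (-(2 * Real.pi * m * k.1 * Complex.I) / n)) = 0 := by
        intro m hm0 hmn
        have h := hterm0 m (Finset.mem_range.mpr hmn)
        have hspos : 0 < Real.sin (Real.pi * m / n) := by
          apply Real.sin_pos_of_pos_of_lt_pi
          · apply div_pos (mul_pos Real.pi_pos (by exact_mod_cast hm0)) (by positivity)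
          · rw [div_lt_iff₀ (by positivity)]
            have : (m:ℝ) < n := by exact_mod_cast hmn
            nlinarith [Real.pi_pos]
        have hx : Complex.normSq (∑ k : Fin n, (v k : ℂ) *
            Complex.exp (-(2 * Real.pi * m * k.1 * Complex.I) / n)) = 0 := by
          rcases mul_eq_zero.mp h with h' | h'
          · exact absurd h' (ne_of_gt (by nlinarith))
          · exact h'
        exact Complex.normSq_eq_zero.mp hx
      refine ⟨(∑ k : Fin n, v k) / n, funext fun j => ?_⟩
      have hS1 : ∑ m ∈ Finset.range n,
          (∑ k : Fin n, (v k : ℂ) * Complex.exp (-(2 * Real.pi * m * k.1 * Complex.I) / n)) *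
            Complex.exp (2 * Real.pi * m * j.1 * Complex.I / n)
          = (∑ k : Fin n, (v k : ℂ) * Complex.exp (-(2 * Real.pi * (0:ℕ) * k.1 * Complex.I) / n)) *
            Complex.exp (2 * Real.pi * (0:ℕ) * j.1 * Complex.I / n) := by
        apply Finset.sum_eq_single_of_mem 0 (Finset.mem_range.mpr hn0)
        intro m hm hm0
        rw [hFzero m (Nat.pos_of_ne_zero hm0) (Finset.mem_range.mp hm), zero_mul]
      have hS2 : ∑ m ∈ Finset.range n,
          (∑ k : Fin n, (v k : ℂ) * Complex.exp (-(2 * Real.pi * m * k.1 * Complex.I) / n)) *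
            Complex.exp (2 * Real.pi * m * j.1 * Complex.I / n)
          = (v j : ℂ) * n := by
        simp only [Finset.sum_mul]
        rw [Finset.sum_comm]
        calc ∑ k : Fin n, ∑ m ∈ Finset.range n,
              (v k : ℂ) * Complex.exp (-(2 * Real.pi * m * k.1 * Complex.I) / n) *
                Complex.exp (2 * Real.pi * m * j.1 * Complex.I / n)
            = ∑ k : Fin n, (v k : ℂ) * (if k = j then (n:ℂ) else 0) := by
              refine Finset.sum_congr rfl fun k _ => ?_
              rw [← orth n hn0 j k, Finset.mul_sum]
              exact Finset.sum_congr rfl fun m _ => by ring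
          _ = (v j : ℂ) * n := by simp
      have hc : (v j : ℂ) * n = ((∑ k : Fin n, v k : ℝ) : ℂ) := by
        rw [← hS2, hS1]
        push_cast
        simp
      have hr : v j * n = ∑ k : Fin n, v k := by exact_mod_cast hc
      rw [eq_div_iff hnR]
      linarith
    · rintro ⟨c, rfl⟩
      funext j
      have h := sum_form n hn Λ hΛ (fun _ => c) j
      have hz : ∀ m ∈ Finset.range n, (2:ℂ) * (Real.sin (Real.pi * m / n) : ℂ) *
          (Complex.exp (2 * Real.pi * m * j.1 * Complex.I / n) *
            ∑ k : Fin n, ((c:ℂ)) * Complex.exp (-(2 * Real.pi * m * k.1 * Complex.I) / n)) = 0 := by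
        intro m hm
        rcases Nat.eq_zero_or_pos m with h0 | hpos
        · subst h0; norm_num
        · have hz2 : ∑ k : Fin n, ((c:ℂ)) * Complex.exp (-(2 * Real.pi * m * k.1 * Complex.I) / n) = 0 := by
            rw [← Finset.mul_sum, colsum n hn0 m hpos.ne' (Finset.mem_range.mp hm), mul_zero]
          rw [hz2, mul_zero, mul_zero]
      rw [Finset.sum_eq_zero hz, mul_zero] at h
      show Λ.mulVec (fun _ => c) j = (0 : Fin n → ℝ) j
      have : Λ.mulVec (fun _ => c) j = 0 := by exact_mod_cast h
      simpa using this
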